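/- Let E ∈ Mₙ(A) be an idempotent matrix, let M := Aⁿ·E be the image of right multiplication by E on the left A-module Aⁿ of row vectors, and let ρ be an A-module that is finite-dimensional as a k-vector space. Then the space Hom_A(M, ρ) of A-module homomorphisms is finite-dimensional over k, and its dimension, viewed as an element of k, equals Σ_{i=1}^{n} tr_k(E_ii : ρ → ρ), the sum of the traces of the k-linear operators by which the diagonal entries E_ii act on ρ. -/

import Mathlib

/-- The image `Aⁿ·E` of right multiplication by a matrix `E` on the left `A`-module of row
vectors, as a submodule of `Fin n → A`. -/
def rowImage {A : Type*} [Ring A] {n : ℕ} (E : Matrix (Fin n) (Fin n) A) :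
    Submodule A (Fin n → A) where
  carrier := {x | ∃ y : Fin n → A, Matrix.vecMul y E = x}
  add_mem' := by rintro a b ⟨y, rfl⟩ ⟨z, rfl⟩; exact ⟨y + z, Matrix.add_vecMul E y z⟩
  zero_mem' := ⟨0, Matrix.zero_vecMul E⟩
  smul_mem' := by rintro r a ⟨y, rfl⟩; exact ⟨r • y, Matrix.smul_vecMul r y E⟩

/-- The `k`-linear endomorphism of an `A`-module `ρ` given by the action of an element
`a ∈ A`, where `A` is a `k`-algebra. -/
def actionMap {k : Type*} [Field k] {A : Type*} [Ring A] [Algebra k A]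
    {ρ : Type*} [AddCommGroup ρ] [Module A ρ] [Module k ρ] [IsScalarTower k A ρ]
    (a : A) : ρ →ₗ[k] ρ where
  toFun x := a • x
  map_add' := smul_add a
  map_smul' c x := by simp [smul_comm a c x]

/-!
Evaluating an `A`-linear map `φ : Aⁿ·E → ρ` on the rows `E₁, …, Eₙ` of `E`, which span `Aⁿ·E`,
identifies `Hom_A(Aⁿ·E, ρ)` with the vectors `v ∈ ρⁿ` satisfying `E v = v`, i.e. with the range of
the idempotent `k`-linear endomorphism `v ↦ E v` of `ρⁿ`. The dimension of the range of an
idempotent is its trace, and the trace of `v ↦ E v` is `Σᵢ tr_k(Eᵢᵢ)`.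
-/

namespace LinearMap

lemma trace_single_comp_comp_proj {R M ι : Type*} [CommRing R] [AddCommGroup M] [Module R M]
    [Module.Free R M] [Module.Finite R M] [Fintype ι] [DecidableEq ι]
    (i j : ι) (f : M →ₗ[R] M) :
    trace R (ι → M) (single R (fun _ => M) i ∘ₗ f ∘ₗ proj j) =
      if i = j then trace R M f else 0 := by
  rw [trace_comp_comm', comp_assoc]
  split_ifs with h
  · subst h
    rw [proj_comp_single_same, comp_id]
  · rw [proj_comp_single_ne R _ _ _ (Ne.symm h), comp_zero, map_zero]

end LinearMap

namespace Matrix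

variable (k : Type*) [Field k] {A : Type*} [Ring A] [Algebra k A]
  {ρ : Type*} [AddCommGroup ρ] [Module A ρ] [Module k ρ] [IsScalarTower k A ρ]
  {ι : Type*} [Fintype ι]

def piActionMap (E : Matrix ι ι A) : (ι → ρ) →ₗ[k] (ι → ρ) :=
  LinearMap.pi fun i => ∑ j, actionMap (E i j) ∘ₗ LinearMap.proj j

@[simp]
lemma piActionMap_apply (E : Matrix ι ι A) (v : ι → ρ) (i : ι) :
    piActionMap k E v i = ∑ j, E i j • v j := by
  simp [piActionMap, actionMap]

lemma piActionMap_mul (E F : Matrix ι ι A) :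
    piActionMap k (E * F) = piActionMap k E ∘ₗ piActionMap (ρ := ρ) k F := by
  ext v i
  simp only [piActionMap_apply, LinearMap.comp_apply, Finset.smul_sum, smul_smul, mul_apply,
    Finset.sum_smul]
  exact Finset.sum_comm

lemma isIdempotentElem_piActionMap {E : Matrix ι ι A} (hE : IsIdempotentElem E) :
    IsIdempotentElem (piActionMap (ρ := ρ) k E) := by
  rw [IsIdempotentElem, Module.End.mul_eq_comp, ← piActionMap_mul, hE.eq]

lemma piActionMap_eq_sum [DecidableEq ι] (E : Matrix ι ι A) :
    piActionMap (ρ := ρ) k E =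
      ∑ i, ∑ j, LinearMap.single k (fun _ => ρ) i ∘ₗ actionMap (E i j) ∘ₗ LinearMap.proj j := by
  ext v i
  simp [actionMap, Pi.single_apply]

lemma trace_piActionMap [DecidableEq ι] [FiniteDimensional k ρ] (E : Matrix ι ι A) :
    LinearMap.trace k (ι → ρ) (piActionMap k E) =
      ∑ i, LinearMap.trace k ρ (actionMap (E i i)) := by
  simp [piActionMap_eq_sum, LinearMap.trace_single_comp_comp_proj]

variable {n : ℕ} {E : Matrix (Fin n) (Fin n) A}

variable (E) in
lemma row_mem_rowImage (i : Fin n) : E i ∈ rowImage E :=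
  ⟨Pi.single i 1, single_one_vecMul i E⟩

lemma sum_smul_row_of_mem_rowImage (hE : IsIdempotentElem E) {x : Fin n → A}
    (hx : x ∈ rowImage E) : ∑ j, x j • E j = x := by
  obtain ⟨y, rfl⟩ := hx
  rw [← vecMul_eq_sum, vecMul_vecMul, hE.eq]

lemma apply_eq_sum_smul_row (hE : IsIdempotentElem E) (φ : rowImage E →ₗ[A] ρ)
    (x : rowImage E) : φ x = ∑ j, x.1 j • φ ⟨E j, row_mem_rowImage E j⟩ := by
  have hx : x = ∑ j, x.1 j • ⟨E j, row_mem_rowImage E j⟩ :=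
    Subtype.ext (by simp [sum_smul_row_of_mem_rowImage hE x.2])
  calc φ x = φ (∑ j, x.1 j • ⟨E j, row_mem_rowImage E j⟩) := congrArg φ hx
    _ = _ := by simp only [map_sum, map_smul]

lemma mem_range_piActionMap_iff {E : Matrix ι ι A} (hE : IsIdempotentElem E) {v : ι → ρ} :
    v ∈ LinearMap.range (piActionMap k E) ↔ piActionMap k E v = v :=
  LinearMap.IsIdempotentElem.mem_range_iff (isIdempotentElem_piActionMap k hE)

def homRowImageEquiv (hE : IsIdempotentElem E) :
    (rowImage E →ₗ[A] ρ) ≃ₗ[k] LinearMap.range (piActionMap (ρ := ρ) k E) where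
  toFun φ := ⟨fun i => φ ⟨E i, row_mem_rowImage E i⟩,
    (mem_range_piActionMap_iff k hE).2 <| funext fun i => by
      simp [apply_eq_sum_smul_row hE φ ⟨E i, _⟩]⟩
  map_add' _ _ := rfl
  map_smul' _ _ := rfl
  invFun v := Fintype.linearCombination A v.1 ∘ₗ (rowImage E).subtype
  left_inv φ := by
    ext x
    simp [Fintype.linearCombination_apply, apply_eq_sum_smul_row hE φ x]
  right_inv v := by
    ext i
    simpa [Fintype.linearCombination_apply] using
      congrFun ((mem_range_piActionMap_iff k hE).1 v.2) i

end Matrix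

open Matrix in
/-- Let `E ∈ Mₙ(A)` be an idempotent matrix over a `k`-algebra `A`, `M = Aⁿ·E` the image of
right multiplication by `E` on row vectors, and `ρ` an `A`-module finite-dimensional over
`k`. Then `Hom_A(M, ρ)` is finite-dimensional over `k` and its dimension, as an element of
`k`, equals `Σ_i tr_k(E_ii : ρ → ρ)`. -/
theorem stmt_11 {k : Type*} [Field k] {A : Type*} [Ring A] [Algebra k A]
    {n : ℕ} (E : Matrix (Fin n) (Fin n) A) (hE : E * E = E)
    {ρ : Type*} [AddCommGroup ρ] [Module A ρ] [Module k ρ] [IsScalarTower k A ρ]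
    [FiniteDimensional k ρ] :
    FiniteDimensional k (rowImage E →ₗ[A] ρ) ∧
    (Module.finrank k (rowImage E →ₗ[A] ρ) : k) =
      ∑ i, LinearMap.trace k ρ (actionMap (E i i)) := by
  have hP := isIdempotentElem_piActionMap (ρ := ρ) k hE
  let e := homRowImageEquiv (ρ := ρ) k hE
  have hfin : FiniteDimensional k (rowImage E →ₗ[A] ρ) := .equiv e.symm
  refine ⟨hfin, ?_⟩
  rw [e.finrank_eq, ← (LinearMap.IsIdempotentElem.isProj_range _ hP).trace, trace_piActionMap]
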